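/- Suppose the trivial extension algebra A⋉X satisfies condition (★) and that A and X are both 2-torsion free. Let L be a Lie derivation on A⋉X with components L(a,x) = (L_A(a)+T(x), L_X(a)+S(x)). Then L is proper if and only if there exists a linear map ℓ_A : A → Z(A) such that: (i) L_A − ℓ_A is a derivation on A, and (ii) [ℓ_A(pap), x] = 0 = [ℓ_A(qaq), x] for all a∈A and x∈X. -/

import Mathlib

/-!
For the forward direction take `ℓ_A(a) = ℓ(a, 0)_A`: an element `(a, 0)` of `A ⋉ X` is central
exactly when `a` is central in `A` and commutes with `X`.

Conversely, the Lie identity on `A × 0` makes `L_A` a Lie derivation, so the central map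
`ℓ_A = L_A - (L_A - ℓ_A)` kills commutators, in particular `pAq = [p, pAq]` and `qAp = [qAp, p]`;
by the Peirce decomposition every `ℓ_A(a)` then commutes with `X`. The Lie identity at
`((a, 0), (0, x))` together with `X = pXq` makes `T` an `A`-bimodule map. Put
`ℓ(a, x) = (ℓ_A(a), 0)` and `D = L - ℓ`. The derivation defect `Ψ(u, v) = D(uv) - D(u)v - uD(v)`
is symmetric because `D` is a Lie derivation, and takes values in `0 × X`, so `PΨ = Ψ` and
`ΨP = 0` for `P = (p, 0)`. Evaluating the cocycle identity
`uΨ(v, w) - Ψ(uv, w) + Ψ(u, vw) - Ψ(u, v)w = 0` at triples built from `P` forces `Ψ = 0`.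
-/

open TrivSqZeroExt MulOpposite

section DerivDefect

variable {B : Type*} [Ring B]

def derivDefect (D : B → B) (u v : B) : B :=
  D (u * v) - D u * v - u * D v

lemma derivDefect_eq_zero_iff {D : B → B} {u v : B} :
    derivDefect D u v = 0 ↔ D (u * v) = D u * v + u * D v := by
  rw [derivDefect, sub_sub, sub_eq_zero]

lemma derivDefect_cocycle (D : B → B) (u v w : B) :
    u * derivDefect D v w - derivDefect D (u * v) w + derivDefect D u (v * w)
      - derivDefect D u v * w = 0 := by
  simp only [derivDefect]
  noncomm_ring

lemma derivDefect_eq_zero_of_comm_of_corner {D : B → B} {P : B} (hP : P * P = P)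
    (htor : ∀ b : B, b + b = 0 → b = 0)
    (hcomm : ∀ u v, derivDefect D u v = derivDefect D v u)
    (hleft : ∀ u v, P * derivDefect D u v = derivDefect D u v)
    (hright : ∀ u v, derivDefect D u v * P = 0) (u v : B) :
    derivDefect D u v = 0 := by
  set Ψ := derivDefect D
  have cocycle : ∀ u v w, u * Ψ v w - Ψ (u * v) w + Ψ u (v * w) - Ψ u v * w = 0 :=
    derivDefect_cocycle D
  have hPP : Ψ P P = 0 := by simpa [hP, hleft, hright] using cocycle P P P
  have hP_Pu : ∀ u, Ψ P (P * u) = 0 := fun u => by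
    simpa [hP, hleft, hPP] using cocycle P P u
  have huP_P : ∀ u, Ψ (u * P) P = Ψ u P := fun u => by
    have := cocycle u P P
    rw [hPP, hP, hright] at this
    exact (neg_add_eq_zero.1 (by simpa using this))
  have huP : ∀ u, Ψ u P = 0 := fun u => by
    have := cocycle P u P
    rw [hleft, hcomm (P * u), hP_Pu, hcomm P, huP_P, hright] at this
    exact htor _ (by simpa using this)
  have hPu : ∀ u, Ψ P u = 0 := fun u => (hcomm P u).trans (huP u)
  have hu_vP : ∀ u v, Ψ u (v * P) = 0 := fun u v => by
    simpa [huP, hright] using cocycle u v P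
  have hPu_v : ∀ u v, Ψ (P * u) v = Ψ u v := fun u v => by
    have := cocycle P u v
    rw [hleft, hPu, hPu, zero_mul] at this
    simpa [sub_eq_zero, eq_comm] using this
  have hu_Pv : ∀ u v, Ψ u (P * v) = Ψ (u * P) v := fun u v => by
    have := cocycle u P v
    rw [hPu, huP, mul_zero, zero_mul] at this
    simpa [sub_eq_zero, eq_comm, neg_add_eq_zero] using this
  calc Ψ u v = Ψ (P * v) u := (hcomm u v).trans (hPu_v v u).symm
    _ = Ψ (u * P) v := (hcomm _ _).trans (hu_Pv u v)
    _ = 0 := (hcomm _ _).trans (hu_vP v u)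

end DerivDefect

section LieDerivation

variable {R B : Type*} [Semiring R] [Ring B] [Module R B]

def IsProperLieDerivation (L : B →ₗ[R] B) : Prop :=
  ∃ D ℓ : B →ₗ[R] B, (∀ u v, D (u * v) = D u * v + u * D v) ∧ (∀ u, ℓ u ∈ Set.center B)
    ∧ (∀ u v, ℓ (u * v - v * u) = 0) ∧ L = D + ℓ

lemma derivDefect_sub_comm (L ℓ : B →ₗ[R] B)
    (hL : ∀ u v, L (u * v - v * u) = (L u * v - v * L u) + (u * L v - L v * u))
    (hℓ : ∀ u, ℓ u ∈ Set.center B) (hℓ₀ : ∀ u v, ℓ (u * v - v * u) = 0) (u v : B) :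
    derivDefect (L - ℓ) u v = derivDefect (L - ℓ) v u := by
  have hcomm : ∀ u v, ℓ u * v = v * ℓ u := fun u v =>
    ((Semigroup.mem_center_iff.1 (hℓ u)) v).symm
  have key : derivDefect (L - ℓ) u v - derivDefect (L - ℓ) v u
      = (L (u * v - v * u) - ((L u * v - v * L u) + (u * L v - L v * u)))
        - ℓ (u * v - v * u) + ((ℓ u * v - v * ℓ u) + (u * ℓ v - ℓ v * u)) := by
    simp only [derivDefect, LinearMap.sub_apply, map_sub, sub_mul, mul_sub]
    abel
  rw [← sub_eq_zero, key, hL, hℓ₀, hcomm u v, hcomm v u]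
  abel

lemma map_commutator_eq_zero_of_sub_derivation (L ℓ : B →ₗ[R] B)
    (hL : ∀ u v, L (u * v - v * u) = (L u * v - v * L u) + (u * L v - L v * u))
    (hℓ : ∀ u, ℓ u ∈ Set.center B)
    (hd : ∀ u v, (L - ℓ) (u * v) = (L - ℓ) u * v + u * (L - ℓ) v) (u v : B) :
    ℓ (u * v - v * u) = 0 := by
  have hcomm : ∀ u v, ℓ u * v = v * ℓ u := fun u v =>
    ((Semigroup.mem_center_iff.1 (hℓ u)) v).symm
  calc ℓ (u * v - v * u) = L (u * v - v * u) - ((L - ℓ) (u * v) - (L - ℓ) (v * u)) := by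
        simp only [LinearMap.sub_apply, map_sub]; abel
    _ = (ℓ u * v - v * ℓ u) + (u * ℓ v - ℓ v * u) := by
        rw [hL, hd, hd]; simp only [LinearMap.sub_apply, sub_mul, mul_sub]; abel
    _ = 0 := by rw [hcomm u v, hcomm v u]; abel

end LieDerivation

lemma map_eq_map_corner_add_map_corner {A M F : Type*} [Ring A] [AddCommGroup M]
    [FunLike F A M] [AddMonoidHomClass F A M] (f : F) (hf : ∀ a b, f (a * b - b * a) = 0)
    {p : A} (hp : p * p = p) (a : A) :
    f a = f (p * a * p) + f ((1 - p) * a * (1 - p)) := by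
  have hpq : p * (1 - p) = 0 := by rw [mul_sub, mul_one, hp, sub_self]
  have hqp : (1 - p) * p = 0 := by rw [sub_mul, one_mul, hp, sub_self]
  have hpaq : f (p * a * (1 - p)) = 0 := by
    convert hf p (p * a * (1 - p)) using 2
    rw [← mul_assoc, ← mul_assoc, hp, mul_assoc _ _ p, hqp, mul_zero, sub_zero]
  have hqap : f ((1 - p) * a * p) = 0 := by
    convert hf ((1 - p) * a * p) p using 2
    rw [mul_assoc _ p p, hp, ← mul_assoc, ← mul_assoc, hpq, zero_mul, zero_mul, sub_zero]
  calc f a = f (p * a * p + p * a * (1 - p) + ((1 - p) * a * p + (1 - p) * a * (1 - p))) := by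
        congr 1; noncomm_ring
    _ = _ := by rw [map_add, map_add, map_add, hpaq, hqap, add_zero, zero_add]

section Bimodule

variable {A X : Type*} [Ring A] [AddCommGroup X] [Module A X] [Module Aᵐᵒᵖ X] {p : A}

lemma smul_eq_self_of_corner [SMulCommClass A Aᵐᵒᵖ X] (hp : p * p = p)
    (hstar : ∀ x : X, op (1 - p) • (p • x) = x) (x : X) : p • x = x := by
  conv_lhs => rw [← hstar x]
  rw [smul_comm, ← mul_smul, hp, hstar]

lemma op_smul_eq_zero_of_corner (hp : p * p = p)
    (hstar : ∀ x : X, op (1 - p) • (p • x) = x) (x : X) : op p • x = 0 := by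
  rw [← hstar x, ← mul_smul, ← op_mul, sub_mul, one_mul, hp, sub_self, op_zero, zero_smul]

lemma map_smul_and_map_op_smul_of_map_lie {F : Type*} [FunLike F X A] [AddMonoidHomClass F X A]
    (T : F)    (hp : p * p = p) (htor : ∀ a : A, a + a = 0 → a = 0)
    (hpx : ∀ x : X, p • x = x) (hxp : ∀ x : X, op p • x = 0)
    (hT : ∀ (a : A) (x : X), T (a • x - op a • x) = a * T x - T x * a) :
    (∀ (a : A) (x : X), T (a • x) = a * T x) ∧ ∀ (a : A) (x : X), T (op a • x) = T x * a := by
  have hTx : ∀ x, T x = p * T x - T x * p := fun x => by simpa [hpx, hxp] using hT p x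
  have hTp : ∀ x, T x * p = 0 := fun x => by
    have hpTp : p * (T x * p) = 0 := by
      have h := congrArg (p * ·) (hTx x)
      simp only [mul_sub, ← mul_assoc, hp] at h
      rwa [mul_assoc, eq_comm, sub_eq_self] at h
    have h := congrArg (· * p) (hTx x)
    simp only [sub_mul, mul_assoc, hp, hpTp, zero_sub] at h
    exact htor _ (eq_neg_iff_add_eq_zero.1 h)
  have hpT : ∀ x, p * T x = T x := fun x => by simpa [hTp] using (hTx x).symm
  have hTl : ∀ (a : A) (x : X), T (a • x) = a * T x - T x * a * p := fun a x => by
    have h := hT (a * p) x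
    rwa [mul_smul, hpx, op_mul, mul_smul, hxp, sub_zero, mul_assoc, hpT, ← mul_assoc] at h
  have hTap : ∀ (a : A) (x : X), T x * a * p = 0 := fun a x => by
    have h := hTp (a • x)
    rwa [hTl, sub_mul, mul_assoc a, hTp, mul_zero, mul_assoc _ p, hp, zero_sub, neg_eq_zero] at h
  have hTa : ∀ (a : A) (x : X), T (a • x) = a * T x := fun a x => by
    rw [hTl, hTap, sub_zero]
  refine ⟨hTa, fun a x => ?_⟩
  have h := hT a x
  rwa [map_sub, hTa, sub_right_inj] at h

end Bimodule

namespace TrivSqZeroExt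

lemma eq_zero_of_add_self_eq_zero {A X : Type*} [AddGroup A] [AddGroup X]
    (htorA : ∀ a : A, a + a = 0 → a = 0) (htorX : ∀ x : X, x + x = 0 → x = 0)
    {u : TrivSqZeroExt A X} (hu : u + u = 0) : u = 0 :=
  ext (htorA _ (congrArg fst hu)) (htorX _ (congrArg snd hu))

variable {A X : Type*} [Ring A] [AddCommGroup X] [Module A X] [Module Aᵐᵒᵖ X] {p : A}

lemma inl_mul_eq_self_of_fst_eq_zero (hpx : ∀ x : X, p • x = x) {w : TrivSqZeroExt A X}
    (hw : w.fst = 0) : inl p * w = w :=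
  ext (by rw [fst_mul, fst_inl, hw, mul_zero]) (by simp [hpx])

lemma mul_inl_eq_zero_of_fst_eq_zero (hxp : ∀ x : X, op p • x = 0) {w : TrivSqZeroExt A X}
    (hw : w.fst = 0) : w * inl p = 0 :=
  ext (by rw [fst_mul, fst_inl, hw, zero_mul, fst_zero]) (by simp [hxp])

variable [SMulCommClass A Aᵐᵒᵖ X]

lemma mem_center_iff {u : TrivSqZeroExt A X} :
    u ∈ Set.center (TrivSqZeroExt A X) ↔ u.fst ∈ Set.center A
      ∧ (∀ x : X, u.fst • x = op u.fst • x) ∧ ∀ a : A, a • u.snd = op a • u.snd := by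
  simp only [Semigroup.mem_center_iff]
  constructor
  · intro h
    refine ⟨fun a => by simpa using congrArg fst (h (inl a)), fun x => ?_, fun a => ?_⟩
    · simpa using (congrArg snd (h (inr x))).symm
    · simpa using congrArg snd (h (inl a))
  · rintro ⟨hA, hX, hsnd⟩ v
    ext
    · rw [fst_mul, fst_mul, hA]
    · rw [snd_mul, snd_mul, hsnd, hX, add_comm]

lemma fst_derivDefect_eq_zero {F : Type*} [FunLike F X A] [AddMonoidHomClass F X A]
    {D : TrivSqZeroExt A X → TrivSqZeroExt A X} {d : A → A} {T : F}
    (hD : ∀ u, (D u).fst = d u.fst + T u.snd) (hd : ∀ a b, d (a * b) = d a * b + a * d b)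
    (hTl : ∀ (a : A) (x : X), T (a • x) = a * T x)
    (hTr : ∀ (a : A) (x : X), T (op a • x) = T x * a) (u v : TrivSqZeroExt A X) :
    (derivDefect D u v).fst = 0 := by
  simp only [derivDefect, fst_sub, fst_mul, hD, snd_mul, map_add, hTl, hTr, hd, add_mul, mul_add]
  abel

end TrivSqZeroExt

section ProperLieDerivation

variable {R A X : Type*} [CommRing R] [Ring A] [Algebra R A]
  [AddCommGroup X] [Module R X] [Module A X] [Module Aᵐᵒᵖ X]
  [SMulCommClass A Aᵐᵒᵖ X] [IsScalarTower R A X] [IsScalarTower R Aᵐᵒᵖ X]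
  {L : TrivSqZeroExt A X →ₗ[R] TrivSqZeroExt A X} {LA : A →ₗ[R] A}

lemma exists_centralPart_of_isProperLieDerivation (hLA : ∀ a, (L (inl a)).fst = LA a)
    (hL : IsProperLieDerivation L) :
    ∃ ℓA : A →ₗ[R] A, (∀ a, ℓA a ∈ Set.center A)
      ∧ (∀ a b, (LA - ℓA) (a * b) = (LA - ℓA) a * b + a * (LA - ℓA) b)
      ∧ ∀ (a : A) (x : X), ℓA a • x = op (ℓA a) • x := by
  obtain ⟨D, ℓ, hD, hℓ, -, hLD⟩ := hL
  let ℓA : A →ₗ[R] A := (fstHom R A X).toLinearMap ∘ₗ ℓ ∘ₗ (inlAlgHom R A X).toLinearMap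
  have hDfst : ∀ c, (LA - ℓA) c = (D (inl c)).fst := fun c => by
    simpa [ℓA, hLD, sub_eq_iff_eq_add] using (hLA c).symm
  refine ⟨ℓA, fun a => (mem_center_iff.1 (hℓ (inl a))).1, fun a b => ?_,
    fun a => (mem_center_iff.1 (hℓ (inl a))).2.1⟩
  simpa [hDfst] using congrArg fst (hD (inl a) (inl b))

lemma isProperLieDerivation_of_centralPart {p : A} (hp : p * p = p)
    (hstar : ∀ x : X, op (1 - p) • (p • x) = x)
    (htorA : ∀ a : A, a + a = 0 → a = 0) (htorX : ∀ x : X, x + x = 0 → x = 0)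
    (hLie : ∀ u v, L (u * v - v * u) = (L u * v - v * L u) + (u * L v - L v * u))
    {T : X →ₗ[R] A} (hLfst : ∀ u, (L u).fst = LA u.fst + T u.snd)
    {ℓA : A →ₗ[R] A} (hℓA : ∀ a, ℓA a ∈ Set.center A)
    (hder : ∀ a b, (LA - ℓA) (a * b) = (LA - ℓA) a * b + a * (LA - ℓA) b)
    (hX : ∀ (a : A) (x : X), ℓA (p * a * p) • x = op (ℓA (p * a * p)) • x
      ∧ ℓA ((1 - p) * a * (1 - p)) • x = op (ℓA ((1 - p) * a * (1 - p))) • x) :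
    IsProperLieDerivation L := by
  have hpx := smul_eq_self_of_corner hp hstar
  have hxp := op_smul_eq_zero_of_corner hp hstar
  have hLA : ∀ a b, LA (a * b - b * a) = (LA a * b - b * LA a) + (a * LA b - LA b * a) :=
    fun a b => by simpa [hLfst] using congrArg fst (hLie (inl a) (inl b))
  have hℓA₀ := map_commutator_eq_zero_of_sub_derivation LA ℓA hLA hℓA hder
  have hℓAX : ∀ (a : A) (x : X), ℓA a • x = op (ℓA a) • x := fun a x => by
    rw [map_eq_map_corner_add_map_corner ℓA hℓA₀ hp a, add_smul, op_add, add_smul,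
      (hX a x).1, (hX a x).2]
  obtain ⟨hTl, hTr⟩ := map_smul_and_map_op_smul_of_map_lie T hp htorA hpx hxp
    fun a x => by simpa [hLfst] using congrArg fst (hLie (inl a) (inr x))
  let ℓ : TrivSqZeroExt A X →ₗ[R] TrivSqZeroExt A X :=
    (inlAlgHom R A X).toLinearMap ∘ₗ ℓA ∘ₗ (fstHom R A X).toLinearMap
  have hℓ : ∀ u, ℓ u ∈ Set.center (TrivSqZeroExt A X) := fun u =>
    mem_center_iff.2 ⟨hℓA u.fst, hℓAX u.fst, by simp [ℓ]⟩
  have hℓ₀ : ∀ u v, ℓ (u * v - v * u) = 0 := fun u v => by simp [ℓ, hℓA₀]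
  have hfst : ∀ u v, (derivDefect (L - ℓ) u v).fst = 0 :=
    fst_derivDefect_eq_zero (d := LA - ℓA) (fun w => by simp [ℓ, hLfst]; abel) hder hTl hTr
  refine ⟨L - ℓ, ℓ, fun u v => derivDefect_eq_zero_iff.1 ?_, hℓ, hℓ₀, (sub_add_cancel L ℓ).symm⟩
  exact derivDefect_eq_zero_of_comm_of_corner (P := inl p) (by rw [inl_mul_inl, hp])
    (fun _ => eq_zero_of_add_self_eq_zero htorA htorX) (derivDefect_sub_comm L ℓ hLie hℓ hℓ₀)
    (fun u v => inl_mul_eq_self_of_fst_eq_zero hpx (hfst u v))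
    (fun u v => mul_inl_eq_zero_of_fst_eq_zero hxp (hfst u v)) u v

end ProperLieDerivation

theorem lieDerivation_trivialExtension_proper_iff_general
    {R A X : Type*} [CommRing R] [Ring A] [Algebra R A]
    [AddCommGroup X] [Module R X] [Module A X] [Module Aᵐᵒᵖ X]
    [SMulCommClass A Aᵐᵒᵖ X] [IsScalarTower R A X] [IsScalarTower R Aᵐᵒᵖ X]
    (p : A) (hp : p * p = p)
    (hstar : ∀ x : X, op (1 - p) • (p • x) = x)
    (htorA : ∀ a : A, a + a = 0 → a = 0) (htorX : ∀ x : X, x + x = 0 → x = 0)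
    (L : TrivSqZeroExt A X →ₗ[R] TrivSqZeroExt A X)
    (hLie : ∀ u v : TrivSqZeroExt A X,
        L (u * v - v * u) = (L u * v - v * L u) + (u * L v - L v * u))
    (LA : A →ₗ[R] A) (T : X →ₗ[R] A) (LX : A →ₗ[R] X) (S : X →ₗ[R] X)
    (hL : ∀ (a : A) (x : X), L (inl a + inr x) = inl (LA a + T x) + inr (LX a + S x)) :
    (∃ D ℓ : TrivSqZeroExt A X →ₗ[R] TrivSqZeroExt A X,
        (∀ u v : TrivSqZeroExt A X, D (u * v) = D u * v + u * D v)
        ∧ (∀ u : TrivSqZeroExt A X, ℓ u ∈ Set.center (TrivSqZeroExt A X))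
        ∧ (∀ u v : TrivSqZeroExt A X, ℓ (u * v - v * u) = 0)
        ∧ L = D + ℓ)
      ↔ (∃ ℓA : A →ₗ[R] A,
          (∀ a : A, ℓA a ∈ Set.center A)
          ∧ (∀ a b : A, (LA - ℓA) (a * b) = (LA - ℓA) a * b + a * (LA - ℓA) b)
          ∧ (∀ (a : A) (x : X),
              ℓA (p * a * p) • x = op (ℓA (p * a * p)) • x
              ∧ ℓA ((1 - p) * a * (1 - p)) • x = op (ℓA ((1 - p) * a * (1 - p))) • x)) := by
  have hLfst : ∀ u, (L u).fst = LA u.fst + T u.snd := fun u => by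
    simpa using congrArg fst ((congrArg L (inl_fst_add_inr_snd_eq u)).symm.trans (hL _ _))
  constructor
  · intro hproper
    obtain ⟨ℓA, hℓA, hder, hX⟩ :=
      exists_centralPart_of_isProperLieDerivation (LA := LA) (by simp [hLfst]) hproper
    exact ⟨ℓA, hℓA, hder, fun a x => ⟨hX _ x, hX _ x⟩⟩
  · rintro ⟨ℓA, hℓA, hder, hX⟩
    exact isProperLieDerivation_of_centralPart hp hstar htorA htorX hLie hLfst hℓA hder hX

/-- Suppose the trivial extension algebra `A ⋉ X` satisfies
condition (★) and both `A` and `X` are 2-torsion free.  A Lie derivation `L`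
on `A ⋉ X` with components `L(a,x) = (L_A(a) + T(x), L_X(a) + S(x))` is proper
(i.e. a sum of a derivation and a center-valued linear map vanishing on
commutators) if and only if there is a linear map `ℓ_A : A → Z(A)` such that
`L_A - ℓ_A` is a derivation on `A` and
`[ℓ_A(pap), x] = 0 = [ℓ_A(qaq), x]` for all `a ∈ A`, `x ∈ X`. -/
theorem lieDerivation_trivialExtension_proper_iff
    {R A X : Type*} [CommRing R] [Ring A] [Algebra R A]
    [AddCommGroup X] [Module R X] [Module A X] [Module Aᵐᵒᵖ X]
    [SMulCommClass A Aᵐᵒᵖ X] [IsScalarTower R A X] [IsScalarTower R Aᵐᵒᵖ X]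
    (p : A) (hp : p * p = p) (hp0 : p ≠ 0) (hp1 : p ≠ 1)
    (hstar : ∀ x : X, op (1 - p) • (p • x) = x)
    (htorA : ∀ a : A, a + a = 0 → a = 0) (htorX : ∀ x : X, x + x = 0 → x = 0)
    (L : TrivSqZeroExt A X →ₗ[R] TrivSqZeroExt A X)
    (hLie : ∀ u v : TrivSqZeroExt A X,
        L (u * v - v * u) = (L u * v - v * L u) + (u * L v - L v * u))
    (LA : A →ₗ[R] A) (T : X →ₗ[R] A) (LX : A →ₗ[R] X) (S : X →ₗ[R] X)
    (hL : ∀ (a : A) (x : X), L (inl a + inr x) = inl (LA a + T x) + inr (LX a + S x)) :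
    (∃ D ℓ : TrivSqZeroExt A X →ₗ[R] TrivSqZeroExt A X,
        (∀ u v : TrivSqZeroExt A X, D (u * v) = D u * v + u * D v)
        ∧ (∀ u : TrivSqZeroExt A X, ℓ u ∈ Set.center (TrivSqZeroExt A X))
        ∧ (∀ u v : TrivSqZeroExt A X, ℓ (u * v - v * u) = 0)
        ∧ L = D + ℓ)
      ↔ (∃ ℓA : A →ₗ[R] A,
          (∀ a : A, ℓA a ∈ Set.center A)
          ∧ (∀ a b : A, (LA - ℓA) (a * b) = (LA - ℓA) a * b + a * (LA - ℓA) b)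
          ∧ (∀ (a : A) (x : X),
              ℓA (p * a * p) • x = op (ℓA (p * a * p)) • x
              ∧ ℓA ((1 - p) * a * (1 - p)) • x = op (ℓA ((1 - p) * a * (1 - p))) • x)) :=
  lieDerivation_trivialExtension_proper_iff_general p hp hstar htorA htorX L hLie LA T LX S hL
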